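/- arXiv:1811.06189 — 5 statements merged into one kernel-verified Lean document; each statement's English description precedes it below -/
import Mathlib

section
/- Convex additivity domain lemma (Cauchy–Pexider on bounded convex domains): Let f, g, h : ℝ → ℝ be bounded functions and let E ⊆ ℝ² be an open, convex, bounded set such that f(x) + g(y) = h(x+y) for all (x,y) ∈ E. Define the projections p₁(x,y) = x, p₂(x,y) = y, p₃(x,y) = x+y. Then there exists a slope s ∈ ℝ such that f is affine with slope s on p₁(E), g is affine with slope s on p₂(E), and h is affine with slope s on p₃(E). -/
/-!
Near a point `(a, b)` of `E` the increments of `f` at `a`, of `g` at `b` and of `h` at `a + b`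
coincide with one function `χ`, which satisfies Cauchy's equation near `0`. A local solution of
Cauchy's equation extends to an additive map of `ℝ`; being bounded near `0`, that map is
continuous, hence linear. So `f`, `g`, `h` are locally affine with a common local slope. On each
of the open intervals `p₁(E)`, `p₂(E)`, `p₃(E)` the derivative of a locally affine function is
locally constant, hence constant, and comparing at one point of `E` gives the same slope for all
three.
-/

open Set Filter Topology

section LocalCauchy

variable {θ : ℝ → ℝ} {δ : ℝ}

theorem map_natCast_mul_of_additive_near_zero
    (hadd : ∀ u v, |u| < δ → |v| < δ → θ (u + v) = θ u + θ v)
    (n : ℕ) {x : ℝ} (hx : n * |x| < δ) : θ (n * x) = n * θ x := by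
  induction n with
  | zero =>
    have hδ : 0 < δ := by simpa using hx
    simpa using hadd 0 0 (by simpa using hδ) (by simpa using hδ)
  | succ n ih =>
    push_cast at hx ⊢
    have hx₁ : |x| < δ := by nlinarith [abs_nonneg x]
    have hxn : n * |x| < δ := by nlinarith [abs_nonneg x]
    have hnx : |(n : ℝ) * x| < δ := by rwa [abs_mul, Nat.abs_cast]
    rw [add_mul, one_mul, hadd _ _ hnx hx₁, ih hxn]
    ring

theorem natCast_mul_apply_div_eq_of_additive_near_zero
    (hadd : ∀ u v, |u| < δ → |v| < δ → θ (u + v) = θ u + θ v)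
    {k m : ℕ} (hm : 0 < m) {x : ℝ} (hx : |x| < k * δ) :
    k * θ (x / k) = (k * m : ℕ) * θ (x / (k * m : ℕ)) := by
  have hk : (0 : ℝ) < k := by
    rcases Nat.eq_zero_or_pos k with rfl | hk
    · rw [Nat.cast_zero, zero_mul] at hx; linarith [abs_nonneg x]
    · exact_mod_cast hk
  have hsplit : x / k = m * (x / (k * m : ℕ)) := by push_cast; field_simp
  have hsmall : m * |x / (k * m : ℕ)| < δ := by
    push_cast
    rw [abs_div, abs_of_pos (by positivity : (0 : ℝ) < k * m)]
    rw [show (m : ℝ) * (|x| / (k * m)) = |x| / k by field_simp, div_lt_iff₀ hk]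
    linarith
  rw [hsplit, map_natCast_mul_of_additive_near_zero hadd m hsmall]
  push_cast; ring

theorem exists_addMonoidHom_eqOn_of_additive_near_zero (hδ : 0 < δ)
    (hadd : ∀ u v, |u| < δ → |v| < δ → θ (u + v) = θ u + θ v) :
    ∃ Θ : ℝ →+ ℝ, ∀ u, |u| < δ → Θ u = θ u := by
  set N : ℝ → ℕ := fun x => ⌊|x| / δ⌋₊ + 1
  set Θ : ℝ → ℝ := fun x => N x * θ (x / N x)
  have hN : ∀ x, |x| < N x * δ := fun x => by
    rw [← div_lt_iff₀ hδ]; exact_mod_cast Nat.lt_floor_add_one _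
  have hΘ : ∀ x (n : ℕ), 0 < n → |x| < n * δ → Θ x = n * θ (x / n) := fun x n hn hx => by
    change (N x : ℝ) * θ (x / N x) = _
    rw [natCast_mul_apply_div_eq_of_additive_near_zero hadd hn (hN x),
      natCast_mul_apply_div_eq_of_additive_near_zero hadd (Nat.succ_pos _) hx, mul_comm n]
  refine ⟨AddMonoidHom.mk' Θ fun x y => ?_, fun u hu => by simpa using hΘ u 1 one_pos (by simpa)⟩
  obtain ⟨n, hn⟩ := exists_nat_gt ((|x| + |y|) / δ)
  rw [div_lt_iff₀ hδ] at hn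
  have hn₀ : 0 < n := by
    rcases Nat.eq_zero_or_pos n with rfl | h
    · rw [Nat.cast_zero, zero_mul] at hn; linarith [abs_nonneg x, abs_nonneg y]
    · exact h
  have hn' : (0 : ℝ) < n := by exact_mod_cast hn₀
  have hsmall : ∀ w, |w| < n * δ → |w / n| < δ := fun w hw => by
    rwa [abs_div, Nat.abs_cast, div_lt_iff₀ hn', mul_comm]
  have hx : |x| < n * δ := by linarith [abs_nonneg y]
  have hy : |y| < n * δ := by linarith [abs_nonneg x]
  have hxy : |x + y| < n * δ := (abs_add_le x y).trans_lt hn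
  rw [hΘ x n hn₀ hx, hΘ y n hn₀ hy, hΘ _ n hn₀ hxy, add_div,
    hadd _ _ (hsmall x hx) (hsmall y hy), mul_add]

theorem exists_eq_mul_of_additive_near_zero_of_bounded {M : ℝ} (hδ : 0 < δ)
    (hadd : ∀ u v, |u| < δ → |v| < δ → θ (u + v) = θ u + θ v)
    (hbdd : ∀ u, |u| < δ → |θ u| ≤ M) :
    ∃ s, ∀ u, |u| < δ → θ u = s * u := by
  obtain ⟨Θ, hΘ⟩ := exists_addMonoidHom_eqOn_of_additive_near_zero hδ hadd
  have hcont : Continuous Θ := by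
    refine Θ.continuous_of_isBounded_nhds_zero (Metric.ball_mem_nhds 0 hδ)
      ((Metric.isBounded_closedBall (x := 0) (r := M)).subset ?_)
    rintro _ ⟨u, hu, rfl⟩
    rw [mem_ball_zero_iff, Real.norm_eq_abs] at hu
    simpa [hΘ u hu] using hbdd u hu
  refine ⟨Θ 1, fun u hu => ?_⟩
  rw [← hΘ u hu, mul_comm]
  simpa using map_real_smul Θ hcont u 1

end LocalCauchy

theorem Filter.EventuallyEq.hasDerivAt_of_affine {θ : ℝ → ℝ} {x s c : ℝ}
    (h : θ =ᶠ[𝓝 x] fun y => s * y + c) : HasDerivAt θ s x := by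
  have haff : HasDerivAt (fun y => s * y + c) s x := by
    simpa using ((hasDerivAt_id x).const_mul s).add_const c
  exact haff.congr_of_eventuallyEq h

theorem Filter.EventuallyEq.deriv_eventuallyEq_of_affine {θ : ℝ → ℝ} {x s c : ℝ}
    (h : θ =ᶠ[𝓝 x] fun y => s * y + c) : deriv θ =ᶠ[𝓝 x] fun _ => s :=
  h.eventuallyEq_nhds.mono fun _ hy => hy.hasDerivAt_of_affine.deriv

theorem IsOpen.exists_eqOn_affine_of_locally_affine {I : Set ℝ} (hI : IsOpen I)
    (hI' : IsPreconnected I) {θ : ℝ → ℝ}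
    (hθ : ∀ x ∈ I, ∃ s c, θ =ᶠ[𝓝 x] fun y => s * y + c)
    {x₀ s c₀ : ℝ} (hx₀ : x₀ ∈ I) (h₀ : θ =ᶠ[𝓝 x₀] fun y => s * y + c₀) :
    ∃ c, ∀ x ∈ I, θ x = s * x + c := by
  choose t c hloc using hθ
  have hderiv₂ x (hx : x ∈ I) : HasDerivAt (deriv θ) 0 x :=
    (hasDerivAt_const x (t x hx)).congr_of_eventuallyEq (hloc x hx).deriv_eventuallyEq_of_affine
  have hslope : ∀ x ∈ I, deriv θ x = s := fun x hx => by
    rw [hI.is_const_of_deriv_eq_zero hI'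
      (fun y hy => (hderiv₂ y hy).differentiableAt.differentiableWithinAt)
      (fun y hy => (hderiv₂ y hy).deriv) hx hx₀, h₀.hasDerivAt_of_affine.deriv]
  obtain ⟨c, hc⟩ := hI.exists_eq_add_of_deriv_eq hI' (g := fun x => s * x)
    (fun x hx => (hloc x hx).hasDerivAt_of_affine.differentiableAt.differentiableWithinAt)
    (differentiable_id.const_mul s).differentiableOn
    (fun x hx => by simp [hslope x hx])
  exact ⟨c, hc⟩

theorem Convex.exists_eqOn_affine_image_of_locally_affine {V : Type*} [NormedAddCommGroup V]
    [NormedSpace ℝ V] [CompleteSpace V] {E : Set V} (hE' : Convex ℝ E) (hE : IsOpen E)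
    (L : V →L[ℝ] ℝ) (hL : Function.Surjective L) {θ : ℝ → ℝ}
    (hθ : ∀ p ∈ E, ∃ t c, θ =ᶠ[𝓝 (L p)] fun x => t * x + c)
    {p₀ : V} {s c₀ : ℝ} (hp₀ : p₀ ∈ E) (h₀ : θ =ᶠ[𝓝 (L p₀)] fun x => s * x + c₀) :
    ∃ c, ∀ x ∈ L '' E, θ x = s * x + c :=
  (L.isOpenMap hL E hE).exists_eqOn_affine_of_locally_affine
    (hE'.linear_image L.toLinearMap).isPreconnected
    (by rintro _ ⟨p, hp, rfl⟩; exact hθ p hp) ⟨p₀, hp₀, rfl⟩ h₀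

theorem exists_eventuallyEq_affine_of_pexider_near {f g h : ℝ → ℝ} {a b ε M : ℝ} (hε : 0 < ε)
    (hadd : ∀ u v, |u| < ε → |v| < ε → f (a + u) + g (b + v) = h (a + b + (u + v)))
    (hbdd : ∀ w, |w| < ε → |h (a + b + w)| ≤ M) :
    ∃ s, (∃ c, f =ᶠ[𝓝 a] fun x => s * x + c) ∧ (∃ c, g =ᶠ[𝓝 b] fun y => s * y + c) ∧
      ∃ c, h =ᶠ[𝓝 (a + b)] fun z => s * z + c := by
  have h0 : |(0 : ℝ)| < ε := by simpa using hε
  have hfg₀ : f a + g b = h (a + b) := by simpa using hadd 0 0 h0 h0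
  set χ : ℝ → ℝ := fun w => h (a + b + w) - h (a + b) with hχ_def
  have hf u (hu : |u| < ε) : f (a + u) = f a + χ u := by
    have := hadd u 0 hu h0
    rw [add_zero, add_zero] at this
    linarith
  have hg v (hv : |v| < ε) : g (b + v) = g b + χ v := by
    have := hadd 0 v h0 hv
    rw [add_zero, zero_add] at this
    linarith
  have hχ u v (hu : |u| < ε) (hv : |v| < ε) : χ (u + v) = χ u + χ v := by
    linarith [hadd u v hu hv, hf u hu, hg v hv, congrFun hχ_def (u + v)]
  have hM₀ : |h (a + b)| ≤ M := by simpa using hbdd 0 h0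
  obtain ⟨s, hs⟩ := exists_eq_mul_of_additive_near_zero_of_bounded hε hχ (M := 2 * M)
    fun w hw => (abs_sub _ _).trans (by linarith [hbdd w hw])
  have hnear (x₀ : ℝ) : ∀ᶠ x in 𝓝 x₀, |x - x₀| < ε := eventually_abs_sub_lt x₀ hε
  refine ⟨s, ⟨f a - s * a, (hnear a).mono fun x hx => ?_⟩,
    ⟨g b - s * b, (hnear b).mono fun y hy => ?_⟩,
    ⟨h (a + b) - s * (a + b), (hnear (a + b)).mono fun z hz => ?_⟩⟩
  · rw [← add_sub_cancel a x, hf _ hx, hs _ hx]; ring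
  · rw [← add_sub_cancel b y, hg _ hy, hs _ hy]; ring
  · have : h (a + b + (z - (a + b))) - h (a + b) = s * (z - (a + b)) := hs _ hz
    rw [add_sub_cancel] at this
    linarith

theorem IsOpen.exists_eventuallyEq_affine_of_pexider {f g h : ℝ → ℝ} {M : ℝ}
    (hM : ∀ x, |h x| ≤ M) {E : Set (ℝ × ℝ)} (hE : IsOpen E)
    (hadd : ∀ p ∈ E, f p.1 + g p.2 = h (p.1 + p.2)) {p : ℝ × ℝ} (hp : p ∈ E) :
    ∃ s, (∃ c, f =ᶠ[𝓝 p.1] fun x => s * x + c) ∧ (∃ c, g =ᶠ[𝓝 p.2] fun y => s * y + c) ∧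
      ∃ c, h =ᶠ[𝓝 (p.1 + p.2)] fun z => s * z + c := by
  obtain ⟨ε, hε, hball⟩ := Metric.isOpen_iff.1 hE p hp
  refine exists_eventuallyEq_affine_of_pexider_near hε (fun u v hu hv => ?_) fun w _ => hM _
  have hmem : (p.1 + u, p.2 + v) ∈ E := hball <| by
    simpa [Prod.dist_eq, Real.dist_eq] using max_lt hu hv
  simpa [add_add_add_comm] using hadd _ hmem

theorem convex_additivity_domain_lemma_general
    (f g h : ℝ → ℝ)
    (hh : ∃ M : ℝ, ∀ x, |h x| ≤ M)
    (E : Set (ℝ × ℝ)) (hEopen : IsOpen E) (hEconv : Convex ℝ E)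
    (hadd : ∀ p ∈ E, f p.1 + g p.2 = h (p.1 + p.2)) :
    ∃ s : ℝ,
      (∃ b : ℝ, ∀ x ∈ Prod.fst '' E, f x = s * x + b) ∧
      (∃ b : ℝ, ∀ y ∈ Prod.snd '' E, g y = s * y + b) ∧
      (∃ b : ℝ, ∀ z ∈ (fun p : ℝ × ℝ => p.1 + p.2) '' E, h z = s * z + b) := by
  obtain ⟨M, hM⟩ := hh
  rcases E.eq_empty_or_nonempty with rfl | ⟨p₀, hp₀⟩
  · exact ⟨0, ⟨0, by simp⟩, ⟨0, by simp⟩, ⟨0, by simp⟩⟩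
  choose t ht using fun p (hp : p ∈ E) => hEopen.exists_eventuallyEq_affine_of_pexider hM hadd hp
  obtain ⟨⟨c₁, hc₁⟩, ⟨c₂, hc₂⟩, ⟨c₃, hc₃⟩⟩ := ht p₀ hp₀
  have hglobal := hEconv.exists_eqOn_affine_image_of_locally_affine hEopen
  exact ⟨t p₀ hp₀,
    hglobal (.fst ℝ ℝ ℝ) Prod.fst_surjective (fun p hp => ⟨_, (ht p hp).1⟩) hp₀ hc₁,
    hglobal (.snd ℝ ℝ ℝ) Prod.snd_surjective (fun p hp => ⟨_, (ht p hp).2.1⟩) hp₀ hc₂,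
    hglobal (.fst ℝ ℝ ℝ + .snd ℝ ℝ ℝ) (fun z => ⟨(z, 0), by simp⟩)
      (fun p hp => ⟨_, (ht p hp).2.2⟩) hp₀ hc₃⟩

/-- Convex additivity domain lemma (Cauchy--Pexider on bounded convex
open domains). -/
theorem convex_additivity_domain_lemma
    (f g h : ℝ → ℝ)
    (hf : ∃ M : ℝ, ∀ x, |f x| ≤ M) (hg : ∃ M : ℝ, ∀ x, |g x| ≤ M)
    (hh : ∃ M : ℝ, ∀ x, |h x| ≤ M)
    (E : Set (ℝ × ℝ)) (hEopen : IsOpen E) (hEconv : Convex ℝ E)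
    (hEbdd : Bornology.IsBounded E)
    (hadd : ∀ p ∈ E, f p.1 + g p.2 = h (p.1 + p.2)) :
    ∃ s : ℝ,
      (∃ b : ℝ, ∀ x ∈ Prod.fst '' E, f x = s * x + b) ∧
      (∃ b : ℝ, ∀ y ∈ Prod.snd '' E, g y = s * y + b) ∧
      (∃ b : ℝ, ∀ z ∈ (fun p : ℝ × ℝ => p.1 + p.2) '' E, h z = s * z + b) :=
  convex_additivity_domain_lemma_general f g h hh E hEopen hEconv hadd
end

section
/- If a function θ : ℝ → ℝ respects a move ensemble Ω, then θ respects the joined move semigroup joinsemi(Ω) = join(⟨Ω⟩). -/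
open Filter Set

noncomputable section

/-- The unrestricted translation (`b = false`) or reflection (`b = true`)
with parameter `p`: `x ↦ x + p`, resp. `x ↦ p - x`. -/
def uEval (b : Bool) (p : ℝ) (x : ℝ) : ℝ := if b then p - x else x + p

/-- A restricted move `γ|_D`: a translation (`isRefl = false`) or a
reflection (`isRefl = true`) together with a domain. -/
structure Move where
  isRefl : Bool
  param : ℝ
  dom : Set ℝ

namespace Move

def eval (m : Move) : ℝ → ℝ := uEval m.isRefl m.param

/-- The character: `+1` for translations, `-1` for reflections. -/
def chi (m : Move) : ℝ := if m.isRefl then -1 else 1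

def image (m : Move) : Set ℝ := m.eval '' m.dom

def graph (m : Move) : Set (ℝ × ℝ) := (fun x => (x, m.eval x)) '' m.dom

/-- Domains of moves must be open intervals or empty. -/
def ValidDom (D : Set ℝ) : Prop := IsOpen D ∧ D.OrdConnected

/-- A valid move: open-interval-or-empty domain; moves with empty domain are
normalized (`param = 0`), so that there are exactly two empty moves, one of
each character. -/
def Valid (m : Move) : Prop := ValidDom m.dom ∧ (m.dom = ∅ → m.param = 0)

/-- The move `γ|_D` (normalized representative). -/
def mk' (b : Bool) (p : ℝ) (D : Set ℝ) : Move :=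
  letI : Decidable (D = ∅) := Classical.dec _
  ⟨b, if D = ∅ then 0 else p, D⟩

/-- Composition of moves: `γ₂|_{D₂} ∘ γ₁|_{D₁} = (γ₂ ∘ γ₁)|_{D₁ ∩ γ₁⁻¹ D₂}`. -/
def comp (m2 m1 : Move) : Move :=
  mk' (m2.isRefl != m1.isRefl)
    (if m2.isRefl then m2.param - m1.param else m1.param + m2.param)
    (m1.dom ∩ m1.eval ⁻¹' m2.dom)

/-- Inverse of a move: `(γ|_D)⁻¹ = γ⁻¹|_{γ(D)}`. -/
def inv (m : Move) : Move :=
  mk' m.isRefl (if m.isRefl then m.param else -m.param) (m.eval '' m.dom)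

/-- The restriction partial order: `m1` is a restriction of `m2`. -/
def le (m1 m2 : Move) : Prop :=
  m1.isRefl = m2.isRefl ∧ m1.dom ⊆ m2.dom ∧ ∀ x ∈ m1.dom, m1.eval x = m2.eval x

end Move

/-- A move ensemble: a set of (valid) moves. -/
def IsMoveEnsemble (Ω : Set Move) : Prop := ∀ m ∈ Ω, m.Valid

/-- A move semigroup: a move ensemble closed under composition and inverse. -/
def IsMoveSemigroup (Γ : Set Move) : Prop :=
  IsMoveEnsemble Γ ∧ (∀ m1 ∈ Γ, ∀ m2 ∈ Γ, Move.comp m2 m1 ∈ Γ) ∧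
    (∀ m ∈ Γ, Move.inv m ∈ Γ)

/-- `⟨Ω⟩`: the smallest move semigroup containing `Ω`. -/
def semi (Ω : Set Move) : Set Move := ⋂₀ {Γ | IsMoveSemigroup Γ ∧ Ω ⊆ Γ}

/-- Axiom (restrict). -/
def RestrictClosed (Ω : Set Move) : Prop :=
  ∀ m ∈ Ω, ∀ D' : Set ℝ, D' ⊆ m.dom → Move.ValidDom D' →
    Move.mk' m.isRefl m.param D' ∈ Ω

/-- The restriction closure of an ensemble. -/
def restrictCl (Ω : Set Move) : Set Move := ⋂₀ {Γ | RestrictClosed Γ ∧ Ω ⊆ Γ}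

/-- Join-closed: restriction-closed and closed under continuation (joins). -/
def JoinClosed (Ω : Set Move) : Prop :=
  RestrictClosed Ω ∧
    ∀ (b : Bool) (p : ℝ) (J : Set (Set ℝ)), J.Nonempty →
      (∀ I ∈ J, Move.mk' b p I ∈ Ω) → (⋃₀ J).OrdConnected →
      Move.mk' b p (⋃₀ J) ∈ Ω

/-- `join(Ω)`: the smallest join-closed ensemble containing `Ω`. -/
def joinCl (Ω : Set Move) : Set Move := ⋂₀ {Γ | JoinClosed Γ ∧ Ω ⊆ Γ}

/-- `joinsemi(Ω) = join(⟨Ω⟩)`: the joined move semigroup generated by `Ω`. -/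
def joinsemi (Ω : Set Move) : Set Move := joinCl (semi Ω)

/-- `θ` respects the move `γ|_D`: `θ(γ(x)) = χ(γ)·θ(x) + c` on `D`. -/
def Respects (θ : ℝ → ℝ) (m : Move) : Prop :=
  ∃ c : ℝ, ∀ x ∈ m.dom, θ (m.eval x) = m.chi * θ x + c

/-- `θ` respects each move of the ensemble `Ω`. -/
def RespectsAll (θ : ℝ → ℝ) (Ω : Set Move) : Prop := ∀ m ∈ Ω, Respects θ m

/-- All translation moves with graph contained in `O`. -/
def tMoves (O : Set (ℝ × ℝ)) : Set Move :=
  {m | m.isRefl = false ∧ m.Valid ∧ m.graph ⊆ O}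

/-- All reflection moves with graph contained in `O`. -/
def rMoves (O : Set (ℝ × ℝ)) : Set Move :=
  {m | m.isRefl = true ∧ m.Valid ∧ m.graph ⊆ O}

/-- All moves with graph contained in `O`. -/
def movesIn (O : Set (ℝ × ℝ)) : Set Move := {m | m.Valid ∧ m.graph ⊆ O}

/-- Translation moves graph of an ensemble. -/
def grPlus (Ω : Set Move) : Set (ℝ × ℝ) :=
  {q | ∃ m ∈ Ω, m.isRefl = false ∧ q ∈ m.graph}

/-- Reflection moves graph of an ensemble. -/
def grMinus (Ω : Set Move) : Set (ℝ × ℝ) :=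
  {q | ∃ m ∈ Ω, m.isRefl = true ∧ q ∈ m.graph}

/-- `dom(O)`: union of the domains of the moves in `movesIn O`. -/
def domOf (O : Set (ℝ × ℝ)) : Set ℝ := {x | ∃ m ∈ movesIn O, x ∈ m.dom}

/-- `im(O)`: union of the images of the moves in `movesIn O`. -/
def imOf (O : Set (ℝ × ℝ)) : Set ℝ := {x | ∃ m ∈ movesIn O, x ∈ m.image}

/-- domain of a move ensemble. -/
def domEns (Ω : Set Move) : Set ℝ := {x | ∃ m ∈ Ω, x ∈ m.dom}

/-- image of a move ensemble. -/
def imEns (Ω : Set Move) : Set ℝ := {x | ∃ m ∈ Ω, x ∈ m.image}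

/-- Convergence of a sequence of unrestricted moves (character, parameter):
all but finitely many have character `b`, and the parameters tend to `p`. -/
def ConvergesTo (γ : ℕ → Bool × ℝ) (b : Bool) (p : ℝ) : Prop :=
  (∀ᶠ i in atTop, (γ i).1 = b) ∧ Tendsto (fun i => (γ i).2) atTop (nhds p)

/-- Axiom (lim): fixed-domain limits of moves. -/
def LimClosed (Ω : Set Move) : Prop :=
  ∀ D : Set ℝ, Move.ValidDom D →
    ∀ (γ : ℕ → Bool × ℝ) (b : Bool) (p : ℝ), ConvergesTo γ b p →
      (∀ i, Move.mk' (γ i).1 (γ i).2 D ∈ Ω) → Move.mk' b p D ∈ Ω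

/-- `lim(Ω)`: the smallest superset of `Ω` satisfying (lim). -/
def limCl (Ω : Set Move) : Set Move := ⋂₀ {Γ | LimClosed Γ ∧ Ω ⊆ Γ}

/-- Axiom (arblim): limits of moves with converging domains. -/
def ArbLimClosed (Ω : Set Move) : Prop :=
  ∀ (γ : ℕ → Bool × ℝ) (b : Bool) (p : ℝ) (l u : ℕ → ℝ) (l₀ u₀ : ℝ),
    ConvergesTo γ b p → Tendsto l atTop (nhds l₀) → Tendsto u atTop (nhds u₀) →
    (∀ i, Move.mk' (γ i).1 (γ i).2 (Set.Ioo (l i) (u i)) ∈ Ω) →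
    Move.mk' b p (Set.Ioo l₀ u₀) ∈ Ω

/-- `arblim(Ω)`: the smallest superset of `Ω` satisfying (arblim). -/
def arblimCl (Ω : Set Move) : Set Move := ⋂₀ {Γ | ArbLimClosed Γ ∧ Ω ⊆ Γ}

/-- Axiom (kaleido). -/
def Kaleidoscopic (Ω : Set Move) : Prop :=
  ∀ D I : Set ℝ, Move.ValidDom D → Move.ValidDom I →
    (tMoves (D ×ˢ I) ⊆ Ω ↔ rMoves (D ×ˢ I) ⊆ Ω)

/-- Axiom (extend_A): continuous domain extension relative to the open set `A`. -/
def ExtendClosed (A : Set ℝ) (Ω : Set Move) : Prop :=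
  ∀ (b : Bool) (p : ℝ) (J : Set (Set ℝ)) (D : Set ℝ), J.Nonempty →
    (∀ I ∈ J, Move.mk' b p I ∈ Ω) → Move.ValidDom D →
    D ⊆ closure (⋃₀ J) ∩ A ∩ uEval b p ⁻¹' A →
    Move.mk' b p D ∈ Ω

/-- `joinextend_A(Ω)`: the smallest superset of `Ω` satisfying (extend_A). -/
def joinExtendCl (A : Set ℝ) (Ω : Set Move) : Set Move :=
  ⋂₀ {Γ | ExtendClosed A Γ ∧ Ω ⊆ Γ}

/-- A closed move semigroup with respect to the open set `A`. -/
def ClosedMoveSemigroup (A : Set ℝ) (Γ : Set Move) : Prop :=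
  IsMoveSemigroup Γ ∧ JoinClosed Γ ∧ Kaleidoscopic Γ ∧ LimClosed Γ ∧
    ExtendClosed A Γ

/-- The moves closure `ctscl(Ω)`: the smallest closed move semigroup
(with respect to `A`) containing `Ω`. -/
def ctscl (A : Set ℝ) (Ω : Set Move) : Set Move :=
  ⋂₀ {Γ | ClosedMoveSemigroup A Γ ∧ Ω ⊆ Γ}

/-- The set of maximal elements of `Ω` in the restriction partial order. -/
def MaxOf (Ω : Set Move) : Set Move :=
  {m ∈ Ω | ∀ m' ∈ Ω, Move.le m m' → Move.le m' m}

/-!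
The valid moves respected by `θ` form a join-closed move semigroup, so by minimality they contain
`join(⟨Ω⟩)`. Under composition the constants combine as `χ(γ₂) c₁ + c₂`, under inversion as
`-χ(γ) c`. For a join, the defect `θ (γ x) - χ(γ) θ x` is constant on each open piece, hence
locally constant on their union, hence constant because the union is an interval.
-/

theorem IsPreconnected.exists_eqOn_const_of_eventuallyEq {X Y : Type*} [TopologicalSpace X]
    [Nonempty Y] {s : Set X} {g : X → Y} (hs : IsPreconnected s)
    (hg : ∀ x ∈ s, ∀ᶠ y in nhds x, g y = g x) : ∃ c, ∀ x ∈ s, g x = c := by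
  rcases s.eq_empty_or_nonempty with rfl | ⟨x₀, hx₀⟩
  · exact ⟨Classical.arbitrary Y, by simp⟩
  have := isPreconnected_iff_preconnectedSpace.mp hs
  have hloc : IsLocallyConstant (g ∘ Subtype.val : s → Y) :=
    (IsLocallyConstant.iff_eventually_eq _).2 fun x =>
      (continuous_subtype_val.tendsto x).eventually (hg x x.2)
  exact ⟨g x₀, fun x hx => hloc.apply_eq_of_preconnectedSpace ⟨x, hx⟩ ⟨x₀, hx₀⟩⟩

lemma uEval_uEval (b₁ b₂ : Bool) (p₁ p₂ x : ℝ) :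
    uEval b₂ p₂ (uEval b₁ p₁ x) =
      uEval (b₂ != b₁) (if b₂ then p₂ - p₁ else p₁ + p₂) x := by
  cases b₁ <;> cases b₂ <;> simp [uEval] <;> ring

lemma uEval_leftInverse (b : Bool) (p : ℝ) :
    Function.LeftInverse (uEval b (if b then p else -p)) (uEval b p) := by
  intro x; cases b <;> simp [uEval]

lemma uEval_rightInverse (b : Bool) (p : ℝ) :
    Function.RightInverse (uEval b (if b then p else -p)) (uEval b p) := by
  intro x; cases b <;> simp [uEval]

lemma continuous_uEval (b : Bool) (p : ℝ) : Continuous (uEval b p) := by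
  cases b
  · exact continuous_add_const p
  · exact continuous_sub_left p

lemma Move.ValidDom.preimage_uEval {D : Set ℝ} (hD : Move.ValidDom D) (b : Bool) (p : ℝ) :
    Move.ValidDom (uEval b p ⁻¹' D) := by
  refine ⟨hD.1.preimage (continuous_uEval b p), ?_⟩
  cases b
  · exact hD.2.preimage_mono fun _ _ h => add_le_add_left h p
  · exact hD.2.preimage_anti fun _ _ h => sub_le_sub_left h p

lemma Move.ValidDom.image_uEval {D : Set ℝ} (hD : Move.ValidDom D) (b : Bool) (p : ℝ) :
    Move.ValidDom (uEval b p '' D) := by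
  rw [Set.image_eq_preimage_of_inverse (uEval_leftInverse b p) (uEval_rightInverse b p)]
  exact hD.preimage_uEval _ _

namespace Move

lemma mk'_valid (b : Bool) (p : ℝ) {D : Set ℝ} (hD : ValidDom D) : (mk' b p D).Valid :=
  ⟨hD, fun h => by simp [mk', show D = ∅ from h]⟩

lemma Valid.comp {m₁ m₂ : Move} (h₁ : m₁.Valid) (h₂ : m₂.Valid) : (comp m₂ m₁).Valid :=
  mk'_valid _ _
    ⟨h₁.1.1.inter (h₂.1.preimage_uEval _ _).1, h₁.1.2.inter (h₂.1.preimage_uEval _ _).2⟩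

lemma Valid.inv {m : Move} (h : m.Valid) : m.inv.Valid :=
  mk'_valid _ _ (h.1.image_uEval _ _)

end Move

section Respects

variable {θ : ℝ → ℝ}

lemma respects_mk'_iff {b : Bool} {p : ℝ} {D : Set ℝ} :
    Respects θ (Move.mk' b p D) ↔
      ∃ c, ∀ x ∈ D, θ (uEval b p x) = (if b then -1 else 1) * θ x + c := by
  refine exists_congr fun c => forall₂_congr fun x hx => ?_
  have hD : D ≠ ∅ := Set.nonempty_iff_ne_empty.mp ⟨x, hx⟩
  simp [Move.mk', Move.eval, Move.chi, hD]

lemma Respects.comp {m₁ m₂ : Move} (h₁ : Respects θ m₁) (h₂ : Respects θ m₂) :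
    Respects θ (Move.comp m₂ m₁) := by
  obtain ⟨c₁, hc₁⟩ := h₁
  obtain ⟨c₂, hc₂⟩ := h₂
  refine respects_mk'_iff.2 ⟨m₂.chi * c₁ + c₂, fun x ⟨hx₁, hx₂⟩ => ?_⟩
  have hchi : (if (m₂.isRefl != m₁.isRefl) then (-1 : ℝ) else 1) = m₂.chi * m₁.chi := by
    simp only [Move.chi]
    cases m₁.isRefl <;> cases m₂.isRefl <;> norm_num
  rw [← uEval_uEval, hchi]
  change θ (m₂.eval (m₁.eval x)) = _
  rw [hc₂ _ hx₂, hc₁ x hx₁]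
  ring

lemma Respects.inv {m : Move} (h : Respects θ m) : Respects θ m.inv := by
  obtain ⟨c, hc⟩ := h
  refine respects_mk'_iff.2 ⟨-m.chi * c, ?_⟩
  rintro _ ⟨x, hx, rfl⟩
  have hchi : m.chi * m.chi = 1 := by unfold Move.chi; split <;> norm_num
  change θ (uEval m.isRefl _ (uEval m.isRefl m.param x)) = m.chi * θ (m.eval x) + _
  rw [uEval_leftInverse, hc x hx]
  linear_combination (-θ x) * hchi

lemma Respects.restrict {m : Move} (h : Respects θ m) {D : Set ℝ} (hD : D ⊆ m.dom) :
    Respects θ (Move.mk' m.isRefl m.param D) := by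
  obtain ⟨c, hc⟩ := h
  exact respects_mk'_iff.2 ⟨c, fun x hx => hc x (hD hx)⟩

lemma respects_mk'_sUnion {b : Bool} {p : ℝ} {J : Set (Set ℝ)} (hJ : ∀ I ∈ J, IsOpen I)
    (hconn : IsPreconnected (⋃₀ J)) (hresp : ∀ I ∈ J, Respects θ (Move.mk' b p I)) :
    Respects θ (Move.mk' b p (⋃₀ J)) := by
  set defect : ℝ → ℝ := fun x => θ (uEval b p x) - (if b then -1 else 1) * θ x
  have hloc : ∀ x ∈ ⋃₀ J, ∀ᶠ y in nhds x, defect y = defect x := by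
    rintro x ⟨I, hI, hxI⟩
    obtain ⟨c, hc⟩ := respects_mk'_iff.1 (hresp I hI)
    filter_upwards [(hJ I hI).mem_nhds hxI] with y hyI
    simp only [defect, hc y hyI, hc x hxI, add_sub_cancel_left]
  obtain ⟨c, hc⟩ := hconn.exists_eqOn_const_of_eventuallyEq hloc
  exact respects_mk'_iff.2 ⟨c, fun x hx => by linarith [hc x hx]⟩

end Respects

def respectedMoves (θ : ℝ → ℝ) : Set Move := {m | m.Valid ∧ Respects θ m}

lemma isMoveSemigroup_respectedMoves (θ : ℝ → ℝ) : IsMoveSemigroup (respectedMoves θ) :=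
  ⟨fun _ hm => hm.1, fun _ hm₁ _ hm₂ => ⟨hm₁.1.comp hm₂.1, hm₁.2.comp hm₂.2⟩,
    fun _ hm => ⟨hm.1.inv, hm.2.inv⟩⟩

lemma joinClosed_respectedMoves (θ : ℝ → ℝ) : JoinClosed (respectedMoves θ) := by
  refine ⟨fun m hm D hD hvD => ⟨Move.mk'_valid _ _ hvD, hm.2.restrict hD⟩, ?_⟩
  intro b p J _ hJ hconn
  have hopen : ∀ I ∈ J, IsOpen I := fun I hI => (hJ I hI).1.1.1
  exact ⟨Move.mk'_valid _ _ ⟨isOpen_sUnion hopen, hconn⟩,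
    respects_mk'_sUnion hopen hconn.isPreconnected fun I hI => (hJ I hI).2⟩

/-- If `θ` respects a move ensemble `Ω`, then `θ` respects the joined
move semigroup `joinsemi(Ω) = join(⟨Ω⟩)`. -/
theorem respects_joinsemi (θ : ℝ → ℝ) (Ω : Set Move)
    (hΩ : IsMoveEnsemble Ω) (hresp : RespectsAll θ Ω) :
    RespectsAll θ (joinsemi Ω) := by
  have hsemi : semi Ω ⊆ respectedMoves θ :=
    Set.sInter_subset_of_mem ⟨isMoveSemigroup_respectedMoves θ, fun m hm => ⟨hΩ m hm, hresp m hm⟩⟩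
  have hjoin : joinsemi Ω ⊆ respectedMoves θ :=
    Set.sInter_subset_of_mem ⟨joinClosed_respectedMoves θ, hsemi⟩
  exact fun m hm => (hjoin hm).2
end
end

section
/- Let Ω be a move ensemble and let O ⊆ ℝ² be a connected open set; set D = dom(O) and I = im(O). Then: (1) if Gr₊(Ω) contains O, then Gr₊(⟨Ω⟩) contains (D ∪ I) × (D ∪ I); (2) if Gr₋(Ω) contains O, then Gr₋(⟨Ω⟩) contains (D × I) ∪ (I × D) and Gr₊(⟨Ω⟩) contains (D × D) ∪ (I × I); (3) if Gr±(Ω) contains O, then Gr±(⟨Ω⟩) contains (D ∪ I) × (D ∪ I). -/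
open Filter Set

noncomputable section

/-!
Composing moves glues their graphs: if `(a, c)` and `(c, d)` lie on graphs of moves of `⟨Ω⟩`,
then `(a, d)` lies on the graph of the composition, whose character is the product, and inverting
swaps the coordinates. If `O` is covered by graphs of moves of one character, the relation
"`z.1` is translated to `w.1` by a move of `⟨Ω⟩`" on `O` is an equivalence with open classes,
hence total since `O` is connected. Points of `dom O` and `im O` are first, resp. second,
coordinates of points of `O`, so all three claims follow by composing through one base point of `O`.
-/

namespace Move

lemma mem_graph_iff {m : Move} {x y : ℝ} :
    (x, y) ∈ m.graph ↔ x ∈ m.dom ∧ m.eval x = y := by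
  simp only [graph, mem_image, Prod.mk.injEq]
  constructor
  · rintro ⟨x', hx', rfl, rfl⟩
    exact ⟨hx', rfl⟩
  · rintro ⟨hx, rfl⟩
    exact ⟨x, hx, rfl, rfl⟩

lemma eval_mk' {b : Bool} {p : ℝ} {D : Set ℝ} (hD : D.Nonempty) :
    (mk' b p D).eval = uEval b p := by
  simp [eval, mk', hD.ne_empty]

lemma mem_graph_comp {m₁ m₂ : Move} {a c d : ℝ} (h₁ : (a, c) ∈ m₁.graph)
    (h₂ : (c, d) ∈ m₂.graph) : (a, d) ∈ (m₂.comp m₁).graph := by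
  obtain ⟨ha, rfl⟩ := mem_graph_iff.mp h₁
  obtain ⟨hc, rfl⟩ := mem_graph_iff.mp h₂
  have hdom : a ∈ m₁.dom ∩ m₁.eval ⁻¹' m₂.dom := ⟨ha, hc⟩
  refine mem_graph_iff.mpr ⟨hdom, ?_⟩
  rw [comp, eval_mk' ⟨a, hdom⟩]
  simp only [eval]
  cases m₁.isRefl <;> cases m₂.isRefl <;> simp only [uEval] <;> norm_num <;> ring

lemma mem_graph_inv {m : Move} {a c : ℝ} (h : (a, c) ∈ m.graph) :
    (c, a) ∈ m.inv.graph := by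
  obtain ⟨ha, rfl⟩ := mem_graph_iff.mp h
  have hdom : m.eval a ∈ m.eval '' m.dom := mem_image_of_mem _ ha
  refine mem_graph_iff.mpr ⟨hdom, ?_⟩
  rw [inv, eval_mk' ⟨_, hdom⟩]
  simp only [eval]
  cases m.isRefl <;> simp only [uEval] <;> norm_num

end Move

lemma subset_semi (Ω : Set Move) : Ω ⊆ semi Ω :=
  fun _ hm _ hΓ => hΓ.2 hm

lemma comp_mem_semi {Ω : Set Move} {m₁ m₂ : Move} (h₁ : m₁ ∈ semi Ω) (h₂ : m₂ ∈ semi Ω) :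
    m₂.comp m₁ ∈ semi Ω :=
  fun Γ hΓ => hΓ.1.2.1 m₁ (h₁ Γ hΓ) m₂ (h₂ Γ hΓ)

lemma inv_mem_semi {Ω : Set Move} {m : Move} (h : m ∈ semi Ω) : m.inv ∈ semi Ω :=
  fun Γ hΓ => hΓ.1.2.2 m (h Γ hΓ)

/-- `grPlus Γ = grOf false Γ` and `grMinus Γ = grOf true Γ` hold by `rfl`. -/
def grOf (b : Bool) (Γ : Set Move) : Set (ℝ × ℝ) :=
  {q | ∃ m ∈ Γ, m.isRefl = b ∧ q ∈ m.graph}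

lemma grOf_mono (b : Bool) {Ω Γ : Set Move} (h : Ω ⊆ Γ) : grOf b Ω ⊆ grOf b Γ :=
  fun _ ⟨m, hm, hb, hq⟩ => ⟨m, h hm, hb, hq⟩

section Generated

variable {Ω : Set Move} {b b₁ b₂ : Bool} {a c d : ℝ}

lemma grOf_semi_trans (h₁ : (a, c) ∈ grOf b₁ (semi Ω)) (h₂ : (c, d) ∈ grOf b₂ (semi Ω)) :
    (a, d) ∈ grOf (b₂ != b₁) (semi Ω) := by
  obtain ⟨m₁, hm₁, rfl, hac⟩ := h₁
  obtain ⟨m₂, hm₂, rfl, hcd⟩ := h₂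
  exact ⟨m₂.comp m₁, comp_mem_semi hm₁ hm₂, rfl, Move.mem_graph_comp hac hcd⟩

lemma grOf_semi_symm (h : (a, c) ∈ grOf b (semi Ω)) : (c, a) ∈ grOf b (semi Ω) := by
  obtain ⟨m, hm, rfl, hac⟩ := h
  exact ⟨m.inv, inv_mem_semi hm, rfl, Move.mem_graph_inv hac⟩

lemma grOf_semi_trans_false (h₁ : (a, c) ∈ grOf false (semi Ω))
    (h₂ : (c, d) ∈ grOf b (semi Ω)) : (a, d) ∈ grOf b (semi Ω) := by
  simpa using grOf_semi_trans h₁ h₂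

lemma grOf_semi_of_common_source (h₁ : (a, c) ∈ grOf false (semi Ω))
    (h₂ : (a, d) ∈ grOf b (semi Ω)) : (c, d) ∈ grOf b (semi Ω) :=
  grOf_semi_trans_false (grOf_semi_symm h₁) h₂

lemma grOf_semi_false_of_common_target (h₁ : (a, c) ∈ grOf b (semi Ω))
    (h₂ : (d, c) ∈ grOf b (semi Ω)) : (a, d) ∈ grOf false (semi Ω) := by
  simpa using grOf_semi_trans h₁ (grOf_semi_symm h₂)

lemma fst_mem_grOf_false_of_isPreconnected {O : Set (ℝ × ℝ)} (hOopen : IsOpen O)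
    (hOconn : IsPreconnected O) (hO : O ⊆ grOf b (semi Ω)) {z w : ℝ × ℝ} (hz : z ∈ O)
    (hw : w ∈ O) : (z.1, w.1) ∈ grOf false (semi Ω) := by
  refine hOconn.induction₂ (fun z w => (z.1, w.1) ∈ grOf false (semi Ω)) (fun z hz => ?_)
    (fun _ _ _ _ _ _ h₁ h₂ => grOf_semi_trans_false h₁ h₂)
    (fun _ _ _ _ h => grOf_semi_symm h) hz hw
  -- `(z.1, w.2) ∈ O` for `w` near `z`, and the moves through it and through `w` share `w.2`.
  have hnear : {w : ℝ × ℝ | (z.1, w.2) ∈ O} ∈ nhds z :=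
    (hOopen.preimage (by fun_prop)).mem_nhds hz
  filter_upwards [nhdsWithin_le_nhds hnear, self_mem_nhdsWithin] with w hzw hw
  exact grOf_semi_false_of_common_target (hO hzw) (hO hw)

end Generated

lemma exists_mk_mem_of_mem_domOf {O : Set (ℝ × ℝ)} {x : ℝ} (hx : x ∈ domOf O) :
    ∃ y, (x, y) ∈ O := by
  obtain ⟨m, ⟨-, hm⟩, hx⟩ := hx
  exact ⟨m.eval x, hm (mem_image_of_mem _ hx)⟩

lemma exists_mk_mem_of_mem_imOf {O : Set (ℝ × ℝ)} {x : ℝ} (hx : x ∈ imOf O) :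
    ∃ y, (y, x) ∈ O := by
  obtain ⟨m, ⟨-, hm⟩, y, hy, rfl⟩ := hx
  exact ⟨y, hm (mem_image_of_mem _ hy)⟩

lemma mem_grOf_semi_of_mem_domOf_imOf {Ω : Set Move} {b : Bool} {O : Set (ℝ × ℝ)} (hOopen : IsOpen O)
    (hOconn : IsPreconnected O) (hO : O ⊆ grOf b (semi Ω)) {z : ℝ × ℝ} (hz : z ∈ O) :
    (∀ x ∈ domOf O, (z.1, x) ∈ grOf false (semi Ω)) ∧
      ∀ x ∈ imOf O, (z.1, x) ∈ grOf b (semi Ω) := by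
  refine ⟨fun x hx => ?_, fun x hx => ?_⟩
  · obtain ⟨y, hxy⟩ := exists_mk_mem_of_mem_domOf hx
    exact fst_mem_grOf_false_of_isPreconnected hOopen hOconn hO hz hxy
  · obtain ⟨y, hyx⟩ := exists_mk_mem_of_mem_imOf hx
    exact grOf_semi_trans_false
      (fst_mem_grOf_false_of_isPreconnected hOopen hOconn hO hz hyx) (hO hyx)

theorem open_sets_of_moves_general (Ω : Set Move)
    (O : Set (ℝ × ℝ)) (hOopen : IsOpen O) (hOconn : IsConnected O) :
    (O ⊆ grPlus Ω →
      (domOf O ∪ imOf O) ×ˢ (domOf O ∪ imOf O) ⊆ grPlus (semi Ω)) ∧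
    (O ⊆ grMinus Ω →
      (domOf O ×ˢ imOf O) ∪ (imOf O ×ˢ domOf O) ⊆ grMinus (semi Ω) ∧
      (domOf O ×ˢ domOf O) ∪ (imOf O ×ˢ imOf O) ⊆ grPlus (semi Ω)) ∧
    (O ⊆ grPlus Ω ∩ grMinus Ω →
      (domOf O ∪ imOf O) ×ˢ (domOf O ∪ imOf O)
        ⊆ grPlus (semi Ω) ∩ grMinus (semi Ω)) := by
  obtain ⟨z, hz⟩ := hOconn.nonempty
  have reach (b : Bool) (hO : O ⊆ grOf b Ω) :=
    mem_grOf_semi_of_mem_domOf_imOf hOopen hOconn.isPreconnected (hO.trans (grOf_mono b (subset_semi Ω))) hz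
  have reach_plus (hO : O ⊆ grPlus Ω) (x) (hx : x ∈ domOf O ∪ imOf O) :
      (z.1, x) ∈ grOf false (semi Ω) :=
    hx.elim ((reach false hO).1 x) ((reach false hO).2 x)
  have translations (hO : O ⊆ grPlus Ω) :
      (domOf O ∪ imOf O) ×ˢ (domOf O ∪ imOf O) ⊆ grPlus (semi Ω) := by
    rintro ⟨x, y⟩ ⟨hx, hy⟩
    exact grOf_semi_of_common_source (reach_plus hO x hx) (reach_plus hO y hy)
  refine ⟨translations, fun hO => ?_, fun hO => ?_⟩
  · obtain ⟨hD, hI⟩ := reach true hO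
    have hDI {x y} (hx : x ∈ domOf O) (hy : y ∈ imOf O) : (x, y) ∈ grOf true (semi Ω) :=
      grOf_semi_of_common_source (hD x hx) (hI y hy)
    refine ⟨?_, ?_⟩
    · rintro ⟨x, y⟩ (⟨hx, hy⟩ | ⟨hx, hy⟩)
      exacts [hDI hx hy, grOf_semi_symm (hDI hy hx)]
    · rintro ⟨x, y⟩ (⟨hx, hy⟩ | ⟨hx, hy⟩)
      · exact grOf_semi_of_common_source (hD x hx) (hD y hy)
      · exact grOf_semi_false_of_common_target (grOf_semi_symm (hI x hx))
          (grOf_semi_symm (hI y hy))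
  · have hO_plus : O ⊆ grPlus Ω := fun q hq => (hO hq).1
    rintro ⟨x, y⟩ ⟨hx, hy⟩
    refine ⟨translations hO_plus ⟨hx, hy⟩, ?_⟩
    -- `x` translates to `z.1`, which reflects to `z.2`, which translates to `y`.
    have hz_minus := grOf_mono true (subset_semi Ω) (hO hz).2
    have hz_plus := grOf_mono false (subset_semi Ω) (hO hz).1
    show (x, y) ∈ grOf true (semi Ω)
    simpa using grOf_semi_trans (grOf_semi_of_common_source (reach_plus hO_plus x hx) hz_minus)
      (grOf_semi_of_common_source hz_plus (reach_plus hO_plus y hy))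

/-- Moves through a connected open set generate a semigroup whose graph
contains the corresponding products of domain and image. -/
theorem open_sets_of_moves (Ω : Set Move) (hΩ : IsMoveEnsemble Ω)
    (O : Set (ℝ × ℝ)) (hOopen : IsOpen O) (hOconn : IsConnected O) :
    (O ⊆ grPlus Ω →
      (domOf O ∪ imOf O) ×ˢ (domOf O ∪ imOf O) ⊆ grPlus (semi Ω)) ∧
    (O ⊆ grMinus Ω →
      (domOf O ×ˢ imOf O) ∪ (imOf O ×ˢ domOf O) ⊆ grMinus (semi Ω) ∧
      (domOf O ×ˢ domOf O) ∪ (imOf O ×ˢ imOf O) ⊆ grPlus (semi Ω)) ∧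
    (O ⊆ grPlus Ω ∩ grMinus Ω →
      (domOf O ∪ imOf O) ×ˢ (domOf O ∪ imOf O)
        ⊆ grPlus (semi Ω) ∩ grMinus (semi Ω)) :=
  open_sets_of_moves_general Ω O hOopen hOconn
end
end

section
/- Let θ : ℝ → ℝ be a bounded function and let D, I ⊆ ℝ be open intervals. The following are equivalent: (1) θ respects tMoves(D × I); (2) θ respects rMoves(D × I); (3) θ respects moves(D × I); (4) θ is affine on D and on I with the same slope. -/
open Filter Set

noncomputable section

/-!
Respecting the reflection moves of `D × I` says that `θ u + θ v` depends only on `u + v`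
(`u ∈ D`, `v ∈ I`), a Pexider equation on `D × I`; respecting the translation moves says the same
of `θ v - θ u` and `v - u`, which is the Pexider equation for `x ↦ -θ (-x)` on `-D` and `θ` on `I`.
For a solution `(f, g)` the increments `δ ↦ g (v₀ + δ) - g v₀` agree with those of `f`, so they are
additive for small `δ`; being bounded, they are linear, since a function additive near `0`
extends to an additive map `ℝ → ℝ` and such a map, bounded near `0`, is continuous. Hence `f` and
`g` are locally affine with one common slope, and affine on the intervals `D` and `I`.
-/

open Topology

def IsAdditiveNearZero (φ : ℝ → ℝ) (ε : ℝ) : Prop :=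
  ∀ x y, |x| < ε → |y| < ε → |x + y| < ε → φ (x + y) = φ x + φ y

namespace IsAdditiveNearZero

variable {φ : ℝ → ℝ} {ε : ℝ}

theorem map_natCast_mul (hφ : IsAdditiveNearZero φ ε) {x : ℝ} (n : ℕ) (hn : |n * x| < ε) :
    φ (n * x) = n * φ x := by
  induction n with
  | zero =>
    simp only [Nat.cast_zero, zero_mul, abs_zero] at hn ⊢
    have h00 := hφ 0 0 (by simpa) (by simpa) (by simpa)
    rw [add_zero] at h00
    linarith
  | succ n ih =>
    have hbound : (n + 1) * |x| < ε := by
      rwa [abs_mul, Nat.abs_cast, Nat.cast_succ] at hn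
    have hx : |x| < ε := by nlinarith [abs_nonneg x, n.cast_nonneg (α := ℝ)]
    have hnx : |(n : ℝ) * x| < ε := by
      rw [abs_mul, Nat.abs_cast]; nlinarith [abs_nonneg x]
    rw [Nat.cast_succ, add_one_mul] at hn ⊢
    rw [hφ _ _ hnx hx hn, ih hnx]
    ring

theorem natCast_mul_map_div_eq_mul_map_div_mul (hφ : IsAdditiveNearZero φ ε) (hε : 0 < ε)
    {x : ℝ} {m n : ℕ} (hm : |x| < m * ε) (hn : 0 < n) :
    m * φ (x / m) = (m * n : ℕ) * φ (x / (m * n : ℕ)) := by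
  have hm0 : (0 : ℝ) < m := pos_of_mul_pos_left ((abs_nonneg x).trans_lt hm) hε.le
  have hn0 : (0 : ℝ) < n := by exact_mod_cast hn
  have hdiv : (n : ℝ) * (x / (m * n : ℕ)) = x / m := by push_cast; field_simp
  have hsmall : |n * (x / (m * n : ℕ))| < ε := by
    rw [hdiv, abs_div, Nat.abs_cast, div_lt_iff₀ hm0]
    linarith
  rw [← hdiv, hφ.map_natCast_mul n hsmall]
  push_cast
  ring

theorem natCast_mul_map_div_eq (hφ : IsAdditiveNearZero φ ε) (hε : 0 < ε) {x : ℝ} {m n : ℕ}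
    (hm : |x| < m * ε) (hn : |x| < n * ε) : m * φ (x / m) = n * φ (x / n) := by
  have hm0 : 0 < m := by exact_mod_cast pos_of_mul_pos_left ((abs_nonneg x).trans_lt hm) hε.le
  have hn0 : 0 < n := by exact_mod_cast pos_of_mul_pos_left ((abs_nonneg x).trans_lt hn) hε.le
  rw [hφ.natCast_mul_map_div_eq_mul_map_div_mul hε hm hn0,
    hφ.natCast_mul_map_div_eq_mul_map_div_mul hε hn hm0, mul_comm m n]

theorem exists_addMonoidHom_eq (hφ : IsAdditiveNearZero φ ε) (hε : 0 < ε) :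
    ∃ Φ : ℝ →+ ℝ, ∀ x, |x| < ε → Φ x = φ x := by
  choose N hN using fun x : ℝ => exists_nat_gt (|x| / ε)
  let Φ : ℝ → ℝ := fun x => N x * φ (x / N x)
  have hΦ : ∀ x (n : ℕ), |x| < n * ε → Φ x = n * φ (x / n) :=
    fun x n hn => hφ.natCast_mul_map_div_eq hε ((div_lt_iff₀ hε).mp (hN x)) hn
  refine ⟨AddMonoidHom.mk' Φ fun x y => ?_, fun x hx => ?_⟩
  · obtain ⟨n, hn⟩ := exists_nat_gt ((|x| + |y|) / ε)
    rw [div_lt_iff₀ hε] at hn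
    have hn0 : (0 : ℝ) < n :=
      pos_of_mul_pos_left ((add_nonneg (abs_nonneg x) (abs_nonneg y)).trans_lt hn) hε.le
    have hsmall : ∀ z, |z| ≤ |x| + |y| → |z / n| < ε := fun z hz => by
      rw [abs_div, Nat.abs_cast, div_lt_iff₀ hn0]; linarith
    have hx := hsmall x (le_add_of_nonneg_right (abs_nonneg y))
    have hy := hsmall y (le_add_of_nonneg_left (abs_nonneg x))
    rw [hΦ (x + y) n (by linarith [abs_add_le x y]), hΦ x n (by linarith [abs_nonneg y]),
      hΦ y n (by linarith [abs_nonneg x]), add_div,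
      hφ _ _ hx hy (by rw [← add_div]; exact hsmall _ (abs_add_le x y)), mul_add]
  · simpa using hΦ x 1 (by simpa using hx)

theorem exists_eq_mul_of_bounded (hφ : IsAdditiveNearZero φ ε) (hε : 0 < ε) {C : ℝ}
    (hbdd : ∀ x, |x| < ε → |φ x| ≤ C) : ∃ s, ∀ x, |x| < ε → φ x = s * x := by
  obtain ⟨Φ, hΦ⟩ := hφ.exists_addMonoidHom_eq hε
  have hcont : Continuous Φ := by
    refine Φ.continuous_of_isBounded_nhds_zero (Metric.ball_mem_nhds 0 hε)
      (isBounded_iff_forall_norm_le.mpr ⟨C, ?_⟩)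
    rintro _ ⟨x, hx, rfl⟩
    rw [mem_ball_zero_iff, Real.norm_eq_abs] at hx
    rw [Real.norm_eq_abs, hΦ x hx]
    exact hbdd x hx
  refine ⟨Φ 1, fun x hx => ?_⟩
  rw [← hΦ x hx, mul_comm]
  simpa using map_real_smul Φ hcont x 1

end IsAdditiveNearZero

theorem IsOpen.exists_eq_mul_add_of_eventually_sub_eq {S : Set ℝ} (hS : IsOpen S)
    (hS' : IsPreconnected S) {h : ℝ → ℝ} {s : ℝ}
    (hloc : ∀ x ∈ S, ∀ᶠ y in 𝓝 x, h y - h x = s * (y - x)) :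
    ∃ b, ∀ x ∈ S, h x = s * x + b := by
  have hderiv : ∀ x ∈ S, HasDerivAt h s x := fun x hx => by
    have hlin : HasDerivAt (fun y => h x + s * (y - x)) s x := by
      simpa using ((hasDerivAt_id x).sub_const x).const_mul s |>.const_add (h x)
    exact hlin.congr_of_eventuallyEq ((hloc x hx).mono fun y hy => eq_add_of_sub_eq' hy)
  obtain ⟨b, hb⟩ := hS.exists_eq_add_of_deriv_eq hS'
    (fun x hx => (hderiv x hx).differentiableAt.differentiableWithinAt)
    (differentiable_id.const_mul s).differentiableOn
    (fun x hx => by simp [(hderiv x hx).deriv])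
  exact ⟨b, fun x hx => hb hx⟩

theorem exists_affine_of_pexider {f g : ℝ → ℝ} {D I : Set ℝ}
    (hD : IsOpen D) (hD' : IsPreconnected D) (hI : IsOpen I) (hI' : IsPreconnected I)
    (hDne : D.Nonempty) (hIne : I.Nonempty) {M : ℝ} (hg : ∀ v ∈ I, |g v| ≤ M)
    (H : ∀ u ∈ D, ∀ u' ∈ D, ∀ v ∈ I, ∀ v' ∈ I, u + v = u' + v' → f u + g v = f u' + g v') :
    ∃ s b b' : ℝ, (∀ u ∈ D, f u = s * u + b) ∧ (∀ v ∈ I, g v = s * v + b') := by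
  obtain ⟨u₀, hu₀⟩ := hDne
  obtain ⟨v₀, hv₀⟩ := hIne
  obtain ⟨ε, hε, hball⟩ := Metric.isOpen_iff.mp (hD.prod hI) (u₀, v₀) ⟨hu₀, hv₀⟩
  have hnear : ∀ δ, |δ| < ε → u₀ - δ ∈ D ∧ v₀ + δ ∈ I := fun δ hδ =>
    @hball (u₀ - δ, v₀ + δ) (by simpa [Prod.dist_eq, Real.dist_eq] using hδ)
  have hincr : ∀ u ∈ D, ∀ v ∈ I, ∀ δ, u - δ ∈ D → v + δ ∈ I →
      g (v + δ) - g v = f u - f (u - δ) := fun u hu v hv δ hu' hv' => by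
    linarith [H (u - δ) hu' u hu (v + δ) hv' v hv (by ring)]
  let φ : ℝ → ℝ := fun δ => g (v₀ + δ) - g v₀
  have hφ : ∀ δ, |δ| < ε → φ δ = f u₀ - f (u₀ - δ) := fun δ hδ =>
    hincr u₀ hu₀ v₀ hv₀ δ (hnear δ hδ).1 (hnear δ hδ).2
  have hφadd : IsAdditiveNearZero φ ε := fun x y hx hy hxy => by
    have := hincr u₀ hu₀ (v₀ + x) (hnear x hx).2 y (hnear y hy).1
      (by rw [add_assoc]; exact (hnear _ hxy).2)
    simp only [φ, ← add_assoc] at this ⊢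
    linarith [hφ y hy]
  obtain ⟨s, hs⟩ := hφadd.exists_eq_mul_of_bounded hε (C := M + M) fun x hx =>
    (abs_sub _ _).trans (add_le_add (hg _ (hnear x hx).2) (hg v₀ hv₀))
  obtain ⟨b', hb'⟩ := hI.exists_eq_mul_add_of_eventually_sub_eq hI' (h := g) (s := s)
    fun v hv => by
      filter_upwards [hI.mem_nhds hv, Metric.ball_mem_nhds v hε] with w hw hwv
      rw [Metric.mem_ball, Real.dist_eq] at hwv
      have := hincr u₀ hu₀ v hv (w - v) (hnear _ hwv).1 (by rwa [add_sub_cancel])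
      rw [add_sub_cancel] at this
      rw [this, ← hφ _ hwv, hs _ hwv]
  obtain ⟨b, hb⟩ := hD.exists_eq_mul_add_of_eventually_sub_eq hD' (h := f) (s := s)
    fun u hu => by
      filter_upwards [hD.mem_nhds hu, Metric.ball_mem_nhds u hε] with w hw hwu
      rw [Metric.mem_ball, Real.dist_eq] at hwu
      have := hincr w hw v₀ hv₀ (w - u) (by rwa [sub_sub_cancel]) (hnear _ hwu).2
      rw [sub_sub_cancel] at this
      rw [← this, ← hs _ hwu]
  exact ⟨s, b, b', hb, hb'⟩

theorem exists_affine_of_sub_eq_sub {θ : ℝ → ℝ} {D I : Set ℝ}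
    (hD : IsOpen D) (hD' : IsPreconnected D) (hI : IsOpen I) (hI' : IsPreconnected I)
    (hDne : D.Nonempty) (hIne : I.Nonempty) {M : ℝ} (hθ : ∀ v ∈ I, |θ v| ≤ M)
    (H : ∀ u ∈ D, ∀ u' ∈ D, ∀ v ∈ I, ∀ v' ∈ I, v - u = v' - u' → θ v - θ u = θ v' - θ u') :
    ∃ s b b' : ℝ, (∀ u ∈ D, θ u = s * u + b) ∧ (∀ v ∈ I, θ v = s * v + b') := by
  obtain ⟨s, b, b', hb, hb'⟩ := exists_affine_of_pexider (f := fun x => -θ (-x))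
    (hD.preimage continuous_neg)
    (hD'.ordConnected.preimage_anti fun _ _ => neg_le_neg).isPreconnected
    hI hI' (by simpa using hDne.neg) hIne hθ
    fun u hu u' hu' v hv v' hv' huv => by
      linarith [H (-u) hu (-u') hu' v hv v' hv' (by linarith)]
  refine ⟨s, -b, b', fun u hu => ?_, hb'⟩
  have := hb (-u) (by simpa using hu)
  rw [neg_neg] at this
  linarith

namespace Move

theorem validDom_inter_preimage_uEval {D I : Set ℝ} (hD : ValidDom D) (hI : ValidDom I)
    (b : Bool) (p : ℝ) : ValidDom (D ∩ uEval b p ⁻¹' I) := by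
  refine ⟨hD.1.inter (hI.1.preimage ?_), hD.2.inter ?_⟩
  · cases b
    · exact continuous_id.add continuous_const
    · exact continuous_const.sub continuous_id
  · cases b
    · exact hI.2.preimage_mono fun _ _ h => add_le_add_left h p
    · exact hI.2.preimage_anti fun _ _ h => sub_le_sub_left h p

theorem mem_movesIn_prod {D I : Set ℝ} (hD : ValidDom D) (hI : ValidDom I) (b : Bool) (p : ℝ)
    (hne : (D ∩ uEval b p ⁻¹' I).Nonempty) :
    (⟨b, p, D ∩ uEval b p ⁻¹' I⟩ : Move) ∈ movesIn (D ×ˢ I) :=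
  ⟨⟨validDom_inter_preimage_uEval hD hI b p, fun h => absurd h hne.ne_empty⟩,
    by rintro _ ⟨x, hx, rfl⟩; exact hx⟩

end Move

section Respects

variable {θ : ℝ → ℝ} {D I : Set ℝ}

theorem sub_eq_sub_of_respectsAll_tMoves (hD : Move.ValidDom D) (hI : Move.ValidDom I)
    (h : RespectsAll θ (tMoves (D ×ˢ I))) :
    ∀ u ∈ D, ∀ u' ∈ D, ∀ v ∈ I, ∀ v' ∈ I, v - u = v' - u' → θ v - θ u = θ v' - θ u' := by
  intro u hu u' hu' v hv v' hv' huv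
  have hdom : ∀ x ∈ D, ∀ y ∈ I, y - x = v - u → x ∈ D ∩ uEval false (v - u) ⁻¹' I :=
    fun x hx y hy hxy => ⟨hx, show x + (v - u) ∈ I by rwa [← hxy, add_sub_cancel]⟩
  obtain ⟨c, hc⟩ :=
    h _ ⟨rfl, Move.mem_movesIn_prod hD hI false (v - u) ⟨u, hdom u hu v hv rfl⟩⟩
  have h₁ : θ (u + (v - u)) = 1 * θ u + c := hc u (hdom u hu v hv rfl)
  have h₂ : θ (u' + (v - u)) = 1 * θ u' + c := hc u' (hdom u' hu' v' hv' huv.symm)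
  rw [add_sub_cancel] at h₁
  rw [huv, add_sub_cancel] at h₂
  linarith

theorem add_eq_add_of_respectsAll_rMoves (hD : Move.ValidDom D) (hI : Move.ValidDom I)
    (h : RespectsAll θ (rMoves (D ×ˢ I))) :
    ∀ u ∈ D, ∀ u' ∈ D, ∀ v ∈ I, ∀ v' ∈ I, u + v = u' + v' → θ u + θ v = θ u' + θ v' := by
  intro u hu u' hu' v hv v' hv' huv
  have hdom : ∀ x ∈ D, ∀ y ∈ I, x + y = u + v → x ∈ D ∩ uEval true (u + v) ⁻¹' I :=
    fun x hx y hy hxy => ⟨hx, show u + v - x ∈ I by rwa [← hxy, add_sub_cancel_left]⟩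
  obtain ⟨c, hc⟩ :=
    h _ ⟨rfl, Move.mem_movesIn_prod hD hI true (u + v) ⟨u, hdom u hu v hv rfl⟩⟩
  have h₁ : θ (u + v - u) = -1 * θ u + c := hc u (hdom u hu v hv rfl)
  have h₂ : θ (u + v - u') = -1 * θ u' + c := hc u' (hdom u' hu' v' hv' huv.symm)
  rw [add_sub_cancel_left] at h₁
  rw [huv, add_sub_cancel_left] at h₂
  linarith

theorem respectsAll_movesIn_of_affine {s b b' : ℝ} (hD : ∀ x ∈ D, θ x = s * x + b)
    (hI : ∀ x ∈ I, θ x = s * x + b') : RespectsAll θ (movesIn (D ×ˢ I)) := by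
  rintro ⟨_ | _, p, E⟩ ⟨-, hgraph⟩
  · refine ⟨s * p + b' - b, fun x hx => ?_⟩
    obtain ⟨hxD, hxI⟩ : x ∈ D ∧ x + p ∈ I := hgraph ⟨x, hx, rfl⟩
    change θ (x + p) = 1 * θ x + _
    rw [hI _ hxI, hD _ hxD]
    ring
  · refine ⟨s * p + b' + b, fun x hx => ?_⟩
    obtain ⟨hxD, hxI⟩ : x ∈ D ∧ p - x ∈ I := hgraph ⟨x, hx, rfl⟩
    change θ (p - x) = -1 * θ x + _
    rw [hI _ hxI, hD _ hxD]
    ring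

end Respects

/-- For a bounded function `θ` and nonempty open intervals `D`, `I`:
respecting the translation moves, the reflection moves, or all moves of
`D × I` is equivalent to `θ` being affine on `D` and `I` with one slope. -/
theorem interval_lemma_moves (θ : ℝ → ℝ) (hθ : ∃ M : ℝ, ∀ x, |θ x| ≤ M)
    (D I : Set ℝ) (hD : Move.ValidDom D) (hDne : D.Nonempty)
    (hI : Move.ValidDom I) (hIne : I.Nonempty) :
    List.TFAE
      [RespectsAll θ (tMoves (D ×ˢ I)),
       RespectsAll θ (rMoves (D ×ˢ I)),
       RespectsAll θ (movesIn (D ×ˢ I)),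
       ∃ s b b' : ℝ, (∀ x ∈ D, θ x = s * x + b) ∧ (∀ x ∈ I, θ x = s * x + b')] := by
  obtain ⟨M, hM⟩ := hθ
  have hD' := hD.2.isPreconnected
  have hI' := hI.2.isPreconnected
  tfae_have 3 → 1 := fun h m hm => h m hm.2
  tfae_have 3 → 2 := fun h m hm => h m hm.2
  tfae_have 4 → 3 := fun ⟨_, _, _, hb, hb'⟩ => respectsAll_movesIn_of_affine hb hb'
  tfae_have 1 → 4 := fun h => exists_affine_of_sub_eq_sub hD.1 hD' hI.1 hI' hDne hIne
    (fun v _ => hM v) (sub_eq_sub_of_respectsAll_tMoves hD hI h)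
  tfae_have 2 → 4 := fun h => exists_affine_of_pexider hD.1 hD' hI.1 hI' hDne hIne
    (fun v _ => hM v) (add_eq_add_of_respectsAll_rMoves hD hI h)
  tfae_finish
end
end

section
/- Let Ω^∨ be a join-closed move ensemble. Then join(lim(Ω^∨)) = join(arblim(Ω^∨)), where lim(Ω^∨) and arblim(Ω^∨) are the smallest supersets of Ω^∨ satisfying the axioms (lim) and (arblim), respectively. -/
open Filter Set

noncomputable section

/-! When `Ω` is restriction-closed, both closures are reached in a single step. Encode a move
`γ|_D` by its parameters `(χ, t) ∈ Bool × ℝ`, with `Bool` discrete, and an interval move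
`γ|_(l,u)` by `((χ, t), l, u)`. A fixed-domain limit of moves of `Ω` is then a point of the
closure of the parameters of the moves of `Ω` with domain `D`, and an arbitrary limit is a
point of the closure of the tuples of the interval moves of `Ω`; closures are closed, so
taking limits again adds nothing.

Near each point of its (nonempty) domain, a one-step limit of either kind is the limit of a
sequence of moves of `Ω` all restricted to one bounded interval `(a, c)`: for a fixed-domain
limit restrict to `(a, c) ⊆ D`, for an arbitrary limit take `l < a < c < u` and use that
eventually `lⁱ < a` and `c < uⁱ`. Such a local limit is both a (lim)- and an (arblim)-limit,
and joining the local pieces gives back the move. -/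

open Topology

namespace Move

lemma mk'_eq_mk'_iff {b b' : Bool} {p p' : ℝ} {D D' : Set ℝ} :
    mk' b p D = mk' b' p' D' ↔ b = b' ∧ D = D' ∧ (D.Nonempty → p = p') := by
  rcases D.eq_empty_or_nonempty with rfl | hD
  · simp only [mk']
    aesop
  · simp only [mk', hD.ne_empty]
    aesop

lemma validDom_Ioo (a c : ℝ) : ValidDom (Ioo a c) := ⟨isOpen_Ioo, ordConnected_Ioo⟩

end Move

lemma Set.Ioo_eq_Ioo_iff_of_nonempty {α : Type*} [ConditionallyCompleteLattice α]
    [DenselyOrdered α] {a b c d : α} (h : (Ioo a b).Nonempty) :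
    Ioo a b = Ioo c d ↔ a = c ∧ b = d := by
  refine ⟨fun he => ?_, fun ⟨rfl, rfl⟩ => rfl⟩
  have hab := nonempty_Ioo.1 h
  have hcd := nonempty_Ioo.1 (he ▸ h)
  exact ⟨by rw [← csInf_Ioo hab, he, csInf_Ioo hcd],
    by rw [← csSup_Ioo hab, he, csSup_Ioo hcd]⟩

lemma RestrictClosed.mk'_mem {Ω : Set Move} (hres : RestrictClosed Ω) {b : Bool} {p : ℝ}
    {D D' : Set ℝ} (h : Move.mk' b p D ∈ Ω) (hD' : D' ⊆ D) (hv : Move.ValidDom D') :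
    Move.mk' b p D' ∈ Ω := by
  convert hres _ h D' hD' hv using 1
  refine Move.mk'_eq_mk'_iff.2 ⟨rfl, rfl, fun hne => ?_⟩
  simp [Move.mk', (hne.mono hD').ne_empty]

lemma RestrictClosed.mk'_empty_mem {Ω : Set Move} (hres : RestrictClosed Ω) {b : Bool}
    {p : ℝ} {D : Set ℝ} (h : Move.mk' b p D ∈ Ω) (q : ℝ) : Move.mk' b q ∅ ∈ Ω := by
  have := hres.mk'_mem h (empty_subset D) ⟨isOpen_empty, ordConnected_empty⟩
  rwa [Move.mk'_eq_mk'_iff.2 ⟨rfl, rfl, fun h => absurd h not_nonempty_empty⟩]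

lemma JoinClosed.mk'_mem_of_forall_Ioo {X : Set Move} (hX : JoinClosed X) {b : Bool} {p : ℝ}
    {D : Set ℝ} (hD : D.OrdConnected) (hne : D.Nonempty)
    (h : ∀ x ∈ D, ∃ a c, x ∈ Ioo a c ∧ Ioo a c ⊆ D ∧ Move.mk' b p (Ioo a c) ∈ X) :
    Move.mk' b p D ∈ X := by
  set J : Set (Set ℝ) := {I | I ⊆ D ∧ Move.mk' b p I ∈ X}
  have hJ : ⋃₀ J = D := by
    refine subset_antisymm (sUnion_subset fun I hI => hI.1) fun x hx => ?_
    obtain ⟨a, c, hx, hsub, hmem⟩ := h x hx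
    exact ⟨Ioo a c, ⟨hsub, hmem⟩, hx⟩
  have hJne : J.Nonempty := by
    obtain ⟨x, hx⟩ := hne
    obtain ⟨a, c, -, hsub, hmem⟩ := h x hx
    exact ⟨Ioo a c, hsub, hmem⟩
  simpa only [hJ] using hX.2 b p J hJne (fun I hI => hI.2) (hJ ▸ hD)

lemma exists_mem_eq_of_mem_closure {X Y : Type*} [TopologicalSpace X] [TopologicalSpace Y]
    [DiscreteTopology Y] {f : X → Y} (hf : Continuous f) {s : Set X} {x : X}
    (hx : x ∈ closure s) : ∃ y ∈ s, f y = f x :=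
  let ⟨y, hy, hys⟩ := mem_closure_iff.1 hx _ ((isOpen_discrete {f x}).preimage hf) rfl
  ⟨y, hys, hy⟩

lemma convergesTo_iff_tendsto {γ : ℕ → Bool × ℝ} {b : Bool} {p : ℝ} :
    ConvergesTo γ b p ↔ Tendsto γ atTop (𝓝 (b, p)) := by
  rw [nhds_prod_eq, nhds_discrete, tendsto_prod_iff', tendsto_pure]
  rfl

section Closures

variable {Ω Γ X : Set Move}

lemma subset_limCl : Ω ⊆ limCl Ω := subset_sInter fun _ hΓ => hΓ.2

lemma limCl_subset (hΓ : LimClosed Γ) (h : Ω ⊆ Γ) : limCl Ω ⊆ Γ :=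
  sInter_subset_of_mem ⟨hΓ, h⟩

lemma limClosed_limCl : LimClosed (limCl Ω) :=
  fun D hD γ b p hγ hmem _ hΓ => hΓ.1 D hD γ b p hγ fun i => hmem i _ hΓ

lemma subset_arblimCl : Ω ⊆ arblimCl Ω := subset_sInter fun _ hΓ => hΓ.2

lemma arblimCl_subset (hΓ : ArbLimClosed Γ) (h : Ω ⊆ Γ) : arblimCl Ω ⊆ Γ :=
  sInter_subset_of_mem ⟨hΓ, h⟩

lemma arbLimClosed_arblimCl : ArbLimClosed (arblimCl Ω) :=
  fun γ b p l u l₀ u₀ hγ hl hu hmem _ hΓ =>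
    hΓ.1 γ b p l u l₀ u₀ hγ hl hu fun i => hmem i _ hΓ

lemma subset_joinCl : X ⊆ joinCl X := subset_sInter fun _ hΓ => hΓ.2

lemma joinClosed_joinCl : JoinClosed (joinCl X) :=
  ⟨fun m hm D' hD' hv _ hΓ => hΓ.1.1 m (hm _ hΓ) D' hD' hv,
    fun b p J hJ hmem hord _ hΓ => hΓ.1.2 b p J hJ (fun I hI => hmem I hI _ hΓ) hord⟩

lemma joinCl_subset_joinCl (h : X ⊆ joinCl Γ) : joinCl X ⊆ joinCl Γ :=
  sInter_subset_of_mem ⟨joinClosed_joinCl, h⟩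

end Closures

section OneStepLimits

variable {Ω : Set Move}

def paramsOn (Ω : Set Move) (D : Set ℝ) : Set (Bool × ℝ) := {x | Move.mk' x.1 x.2 D ∈ Ω}

def intervalParams (Ω : Set Move) : Set ((Bool × ℝ) × ℝ × ℝ) :=
  {x | x.1 ∈ paramsOn Ω (Ioo x.2.1 x.2.2)}

-- `Ω ∪ _` because the moves of `Ω` need not have the normalized form `Move.mk' b p D`.
def limOf (Ω : Set Move) : Set Move :=
  Ω ∪ {m | ∃ b p D, Move.ValidDom D ∧ (b, p) ∈ closure (paramsOn Ω D) ∧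
    m = Move.mk' b p D}

def arbLimOf (Ω : Set Move) : Set Move :=
  Ω ∪ {m | ∃ b p l u, ((b, p), l, u) ∈ closure (intervalParams Ω) ∧
    m = Move.mk' b p (Ioo l u)}

lemma paramsOn_anti (hres : RestrictClosed Ω) {D D' : Set ℝ} (hD' : D' ⊆ D)
    (hv : Move.ValidDom D') : paramsOn Ω D ⊆ paramsOn Ω D' :=
  fun _ hx => hres.mk'_mem hx hD' hv

lemma mk'_empty_mem_of_mem_closure_paramsOn (hres : RestrictClosed Ω) {D : Set ℝ} {b : Bool}
    {p : ℝ} (h : (b, p) ∈ closure (paramsOn Ω D)) (q : ℝ) : Move.mk' b q ∅ ∈ Ω := by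
  obtain ⟨y, hy, rfl⟩ := exists_mem_eq_of_mem_closure continuous_fst h
  exact hres.mk'_empty_mem hy q

lemma mk'_empty_mem_of_mem_closure_intervalParams (hres : RestrictClosed Ω) {b : Bool}
    {p l u : ℝ} (h : ((b, p), l, u) ∈ closure (intervalParams Ω)) (q : ℝ) :
    Move.mk' b q ∅ ∈ Ω := by
  obtain ⟨y, hy, rfl⟩ := exists_mem_eq_of_mem_closure (continuous_fst.fst) h
  exact hres.mk'_empty_mem hy q

lemma mem_closure_paramsOn_of_mk'_mem_limOf (hres : RestrictClosed Ω) {c : Bool} {q : ℝ}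
    {D : Set ℝ} (h : Move.mk' c q D ∈ limOf Ω) : (c, q) ∈ closure (paramsOn Ω D) := by
  rcases h with h | ⟨b, p, D', -, hcl, heq⟩
  · exact subset_closure h
  obtain ⟨rfl, rfl, hp⟩ := Move.mk'_eq_mk'_iff.1 heq
  rcases D.eq_empty_or_nonempty with rfl | hne
  · exact subset_closure (mk'_empty_mem_of_mem_closure_paramsOn hres hcl q)
  · rwa [hp hne]

lemma mem_closure_intervalParams_of_mk'_mem_arbLimOf (hres : RestrictClosed Ω) {c : Bool}
    {q l u : ℝ} (h : Move.mk' c q (Ioo l u) ∈ arbLimOf Ω) :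
    ((c, q), l, u) ∈ closure (intervalParams Ω) := by
  rcases h with h | ⟨b, p, l', u', hcl, heq⟩
  · exact subset_closure h
  obtain ⟨rfl, hI, hp⟩ := Move.mk'_eq_mk'_iff.1 heq
  rcases (Ioo l u).eq_empty_or_nonempty with he | hne
  · apply subset_closure
    show Move.mk' c q (Ioo l u) ∈ Ω
    rw [he]
    exact mk'_empty_mem_of_mem_closure_intervalParams hres hcl q
  · obtain ⟨rfl, rfl⟩ := (Set.Ioo_eq_Ioo_iff_of_nonempty hne).1 hI
    rwa [hp hne]

lemma limClosed_limOf (hres : RestrictClosed Ω) : LimClosed (limOf Ω) :=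
  fun D hD _ b p hγ hmem => Or.inr ⟨b, p, D, hD,
    isClosed_closure.mem_of_tendsto (convergesTo_iff_tendsto.1 hγ)
      (Eventually.of_forall fun i => mem_closure_paramsOn_of_mk'_mem_limOf hres (hmem i)), rfl⟩

lemma arbLimClosed_arbLimOf (hres : RestrictClosed Ω) : ArbLimClosed (arbLimOf Ω) :=
  fun _ b p _ _ l₀ u₀ hγ hl hu hmem => Or.inr ⟨b, p, l₀, u₀,
    isClosed_closure.mem_of_tendsto
      ((convergesTo_iff_tendsto.1 hγ).prodMk_nhds (hl.prodMk_nhds hu))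
      (Eventually.of_forall fun i => mem_closure_intervalParams_of_mk'_mem_arbLimOf hres (hmem i)),
    rfl⟩

lemma limCl_subset_limOf (hres : RestrictClosed Ω) : limCl Ω ⊆ limOf Ω :=
  limCl_subset (limClosed_limOf hres) subset_union_left

lemma arblimCl_subset_arbLimOf (hres : RestrictClosed Ω) : arblimCl Ω ⊆ arbLimOf Ω :=
  arblimCl_subset (arbLimClosed_arbLimOf hres) subset_union_left

end OneStepLimits

section LocalLimits

variable {Ω : Set Move}

def IsLocalLimit (Ω : Set Move) (b : Bool) (p : ℝ) (D : Set ℝ) : Prop :=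
  ∀ x ∈ D, ∃ a c, x ∈ Ioo a c ∧ Ioo a c ⊆ D ∧
    (b, p) ∈ closure (paramsOn Ω (Ioo a c))

lemma isLocalLimit_of_mem_closure_paramsOn (hres : RestrictClosed Ω) {b : Bool} {p : ℝ}
    {D : Set ℝ} (hD : IsOpen D) (h : (b, p) ∈ closure (paramsOn Ω D)) :
    IsLocalLimit Ω b p D := by
  intro x hx
  obtain ⟨a, c, hxac, hsub⟩ := mem_nhds_iff_exists_Ioo_subset.1 (hD.mem_nhds hx)
  exact ⟨a, c, hxac, hsub,
    closure_mono (paramsOn_anti hres hsub (Move.validDom_Ioo _ _)) h⟩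

lemma isLocalLimit_of_mem_closure_intervalParams (hres : RestrictClosed Ω) {b : Bool}
    {p l u : ℝ} (h : ((b, p), l, u) ∈ closure (intervalParams Ω)) :
    IsLocalLimit Ω b p (Ioo l u) := by
  rintro x ⟨hlx, hxu⟩
  obtain ⟨a, hla, hax⟩ := exists_between hlx
  obtain ⟨c, hxc, hcu⟩ := exists_between hxu
  set V : Set ((Bool × ℝ) × ℝ × ℝ) := {y | y.2.1 < a ∧ c < y.2.2}
  have hV : IsOpen V :=
    (isOpen_lt continuous_snd.fst continuous_const).inter
      (isOpen_lt continuous_const continuous_snd.snd)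
  have hmaps : MapsTo Prod.fst (V ∩ intervalParams Ω) (paramsOn Ω (Ioo a c)) :=
    fun y ⟨⟨hya, hyc⟩, hy⟩ =>
      paramsOn_anti hres (Ioo_subset_Ioo hya.le hyc.le) (Move.validDom_Ioo _ _) hy
  exact ⟨a, c, ⟨hax, hxc⟩, Ioo_subset_Ioo hla.le hcu.le,
    map_mem_closure (f := Prod.fst) continuous_fst
      (hV.inter_closure ⟨⟨hla, hcu⟩, h⟩) hmaps⟩

lemma mk'_mem_joinCl_limCl_of_isLocalLimit {b : Bool} {p : ℝ} {D : Set ℝ}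
    (hD : D.OrdConnected) (hne : D.Nonempty) (h : IsLocalLimit Ω b p D) :
    Move.mk' b p D ∈ joinCl (limCl Ω) := by
  refine joinClosed_joinCl.mk'_mem_of_forall_Ioo hD hne fun x hx => ?_
  obtain ⟨a, c, hx, hsub, hcl⟩ := h x hx
  obtain ⟨y, hy, hlim⟩ := mem_closure_iff_seq_limit.1 hcl
  exact ⟨a, c, hx, hsub, subset_joinCl <| limClosed_limCl _ (Move.validDom_Ioo _ _) y b p
    (convergesTo_iff_tendsto.2 hlim) fun i => subset_limCl (hy i)⟩

lemma mk'_mem_joinCl_arblimCl_of_isLocalLimit {b : Bool} {p : ℝ} {D : Set ℝ}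
    (hD : D.OrdConnected) (hne : D.Nonempty) (h : IsLocalLimit Ω b p D) :
    Move.mk' b p D ∈ joinCl (arblimCl Ω) := by
  refine joinClosed_joinCl.mk'_mem_of_forall_Ioo hD hne fun x hx => ?_
  obtain ⟨a, c, hx, hsub, hcl⟩ := h x hx
  obtain ⟨y, hy, hlim⟩ := mem_closure_iff_seq_limit.1 hcl
  exact ⟨a, c, hx, hsub, subset_joinCl <| arbLimClosed_arblimCl y b p (fun _ => a) (fun _ => c)
    a c (convergesTo_iff_tendsto.2 hlim) tendsto_const_nhds tendsto_const_nhds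
    fun i => subset_arblimCl (hy i)⟩

lemma limOf_subset_joinCl_arblimCl (hres : RestrictClosed Ω) :
    limOf Ω ⊆ joinCl (arblimCl Ω) := by
  rintro m (hm | ⟨b, p, D, hD, hcl, rfl⟩)
  · exact subset_joinCl (subset_arblimCl hm)
  rcases D.eq_empty_or_nonempty with rfl | hne
  · exact subset_joinCl (subset_arblimCl (mk'_empty_mem_of_mem_closure_paramsOn hres hcl p))
  · exact mk'_mem_joinCl_arblimCl_of_isLocalLimit hD.2 hne
      (isLocalLimit_of_mem_closure_paramsOn hres hD.1 hcl)

lemma arbLimOf_subset_joinCl_limCl (hres : RestrictClosed Ω) :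
    arbLimOf Ω ⊆ joinCl (limCl Ω) := by
  rintro m (hm | ⟨b, p, l, u, hcl, rfl⟩)
  · exact subset_joinCl (subset_limCl hm)
  rcases (Ioo l u).eq_empty_or_nonempty with he | hne
  · rw [he]
    exact subset_joinCl (subset_limCl (mk'_empty_mem_of_mem_closure_intervalParams hres hcl p))
  · exact mk'_mem_joinCl_limCl_of_isLocalLimit ordConnected_Ioo hne
      (isLocalLimit_of_mem_closure_intervalParams hres hcl)

end LocalLimits

theorem joinCl_limCl_eq_joinCl_arblimCl_general (Ω : Set Move)
    (hjoin : JoinClosed Ω) :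
    joinCl (limCl Ω) = joinCl (arblimCl Ω) := by
  have hres := hjoin.1
  exact subset_antisymm
    (joinCl_subset_joinCl ((limCl_subset_limOf hres).trans (limOf_subset_joinCl_arblimCl hres)))
    (joinCl_subset_joinCl
      ((arblimCl_subset_arbLimOf hres).trans (arbLimOf_subset_joinCl_limCl hres)))

/-- For a join-closed move ensemble, the joined limits closure and the joined
arbitrary-limits closure coincide. -/
theorem joinCl_limCl_eq_joinCl_arblimCl (Ω : Set Move)
    (hΩ : IsMoveEnsemble Ω) (hjoin : JoinClosed Ω) :
    joinCl (limCl Ω) = joinCl (arblimCl Ω) :=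
  joinCl_limCl_eq_joinCl_arblimCl_general Ω hjoin
end
end
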